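/- arXiv:2310.12637 — 3 statements merged into one kernel-verified Lean document; each statement's English description precedes it below -/
import Mathlib

section
/- Let b, d be monotone Boolean functions on n variables with d ≥ b | b*. Then the monotone function H : Bool^2 → D_n given by H(00) = d*, H(01) = b, H(10) = b*, H(11) = d is well-defined (monotone) and the corresponding element of D_{n+2} under the isomorphism D_{n+2} ≅ D_n^{Bool^2} is self-dual. -/
abbrev BF (n : ℕ) := (Fin n → Bool) → Bool

def dual {n : ℕ} (f : BF n) : BF n := fun v => ! f (fun i => ! v i)

/-- The function `H : Bool² → (Boolean functions)` with
`H(00) = d*`, `H(01) = b`, `H(10) = b*`, `H(11) = d`. -/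
def H2 {n : ℕ} (b d : BF n) : (Fin 2 → Bool) → BF n := fun u =>
  if u 0 then (if u 1 then d else dual b)
  else (if u 1 then b else dual d)

lemma dual_dual {n : ℕ} (f : BF n) : dual (dual f) = f := by
  funext v; simp [dual]

lemma dual_mono {n : ℕ} {f : BF n} (hf : Monotone f) : Monotone (dual f) := by
  intro v w hvw
  have : (fun i => ! w i) ≤ (fun i => ! v i) := fun i => by
    have h := hvw i
    cases hv : v i <;> cases hw : w i <;> simp_all
  have := hf this
  simp only [dual]
  cases h1 : f (fun i => ! v i) <;> cases h2 : f (fun i => ! w i) <;> simp_all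

lemma dual_anti {n : ℕ} {f g : BF n} (h : f ≤ g) : dual g ≤ dual f := by
  intro v
  have := h (fun i => ! v i)
  simp only [dual]
  cases h1 : f (fun i => ! v i) <;> cases h2 : g (fun i => ! v i) <;> simp_all

theorem stmt_8 {n : ℕ} (b d : BF n) (hb : Monotone b) (hd : Monotone d)
    (hbd : b ⊔ dual b ≤ d) :
    (∀ u, Monotone (H2 b d u)) ∧ Monotone (H2 b d) ∧
      (∀ u : Fin 2 → Bool, H2 b d u = dual (H2 b d (fun i => ! u i))) := by
  have hb_d : b ≤ d := le_trans le_sup_left hbd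
  have hdb_d : dual b ≤ d := le_trans le_sup_right hbd
  have hdd_b : dual d ≤ b := by
    have := dual_anti hdb_d
    rwa [dual_dual] at this
  have hdd_db : dual d ≤ dual b := dual_anti hb_d
  have hdd_d : dual d ≤ d := le_trans hdd_b hb_d
  refine ⟨?_, ?_, ?_⟩
  · intro u
    unfold H2
    split <;> split <;> first | exact hd | exact hb | exact dual_mono hb | exact dual_mono hd
  · intro u v huv
    have h0 := huv 0
    have h1 := huv 1
    unfold H2
    cases hu0 : u 0 <;> cases hu1 : u 1 <;> cases hv0 : v 0 <;> cases hv1 : v 1 <;>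
      simp_all <;>
      first
      | exact le_refl _
      | exact hb_d
      | exact hdb_d
      | exact hdd_b
      | exact hdd_db
      | exact hdd_d
      | exact absurd h0 (by decide)
      | exact absurd h1 (by decide)
  · intro u
    unfold H2
    cases hu0 : u 0 <;> cases hu1 : u 1 <;>
      simp [dual_dual, hu0, hu1]
end

section
/- The number of self-dual monotone Boolean functions on n+2 variables equals the number of pairs (b, d) of monotone Boolean functions on n variables satisfying d ≥ b | b*. Equivalently, λ_{n+2} = Σ_{b ∈ D_n} |{z ∈ D_n : b|b* ≤ z}|. -/
def SelfDual {n : ℕ} (f : BF n) : Prop := f = dual f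

namespace BF
variable {n : ℕ}

@[simp]
theorem dual_dual (f : BF n) : dual (dual f) = f := by
  funext v; simp [dual]

theorem dual_le_dual {f g : BF n} (h : f ≤ g) : dual g ≤ dual f :=
  fun _ => compl_le_compl (h _)

@[simp]
theorem dual_le_dual_iff {f g : BF n} : dual f ≤ dual g ↔ g ≤ f :=
  ⟨fun h => by simpa using dual_le_dual h, dual_le_dual⟩

theorem le_dual_comm {f g : BF n} : f ≤ dual g ↔ g ≤ dual f := by
  rw [← dual_le_dual_iff, dual_dual]

theorem monotone_dual {f : BF n} (hf : Monotone f) : Monotone (dual f) :=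
  fun _ _ h => compl_le_compl (hf fun i => compl_le_compl (h i))

@[simp]
theorem monotone_dual_iff {f : BF n} : Monotone (dual f) ↔ Monotone f :=
  ⟨fun h => by simpa using monotone_dual h, monotone_dual⟩

def cofactor (x : BF (n + 1)) (a : Bool) : BF n := fun v => x (Fin.cons a v)

def ofCofactors (p q : BF n) : BF (n + 1) := fun w => cond (w 0) q p (Fin.tail w)

@[simp]
theorem cofactor_ofCofactors (p q : BF n) (a : Bool) :
    cofactor (ofCofactors p q) a = cond a q p := by
  cases a <;> rfl

theorem ofCofactors_cofactor (x : BF (n + 1)) :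
    ofCofactors (cofactor x false) (cofactor x true) = x := by
  funext w
  induction w using Fin.consCases with
  | cons a v => cases a <;> rfl

theorem ext_cofactor {x y : BF (n + 1)}
    (h₀ : cofactor x false = cofactor y false) (h₁ : cofactor x true = cofactor y true) :
    x = y := by
  rw [← ofCofactors_cofactor x, ← ofCofactors_cofactor y, h₀, h₁]

theorem le_iff_cofactor {x y : BF (n + 1)} :
    x ≤ y ↔ cofactor x false ≤ cofactor y false ∧ cofactor x true ≤ cofactor y true := by
  refine ⟨fun h => ⟨fun v => h _, fun v => h _⟩, fun ⟨h₀, h₁⟩ w => ?_⟩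
  induction w using Fin.consCases with
  | cons a v => cases a; exacts [h₀ v, h₁ v]

theorem cofactor_dual (x : BF (n + 1)) (a : Bool) :
    cofactor (dual x) a = dual (cofactor x (!a)) := by
  funext v
  simp only [cofactor, dual]
  rw [← Function.comp_def not, Fin.comp_cons]
  rfl

theorem monotone_iff_cofactor {x : BF (n + 1)} :
    Monotone x ↔ Monotone (cofactor x false) ∧ Monotone (cofactor x true) ∧
      cofactor x false ≤ cofactor x true := by
  refine ⟨fun h => ⟨fun v w hvw => h (Fin.cons_le_cons.2 ⟨le_rfl, hvw⟩),
    fun v w hvw => h (Fin.cons_le_cons.2 ⟨le_rfl, hvw⟩),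
    fun v => h (Fin.cons_le_cons.2 ⟨Bool.false_le _, le_rfl⟩)⟩, fun ⟨h₀, h₁, h₀₁⟩ w w' h => ?_⟩
  induction w using Fin.consCases with | cons a v => ?_
  induction w' using Fin.consCases with | cons a' v' => ?_
  obtain ⟨ha, hv⟩ := Fin.cons_le_cons.1 h
  cases a <;> cases a'
  · exact h₀ hv
  · exact (h₀₁ v).trans (h₁ hv)
  · exact absurd ha (by decide)
  · exact h₁ hv

theorem selfDual_iff_cofactor {x : BF (n + 1)} :
    SelfDual x ↔ cofactor x true = dual (cofactor x false) := by
  refine ⟨fun h => ?_, fun h => ext_cofactor ?_ ?_⟩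
  · conv_lhs => rw [h, cofactor_dual]
    rfl
  · rw [cofactor_dual, Bool.not_false, h, dual_dual]
  · rw [cofactor_dual, Bool.not_true, h]

theorem le_dual_iff_cofactor {g : BF (n + 1)} :
    g ≤ dual g ↔ cofactor g false ≤ dual (cofactor g true) := by
  rw [le_iff_cofactor, cofactor_dual, cofactor_dual, Bool.not_false, Bool.not_true,
    le_dual_comm (f := cofactor g true), and_self]

def selfDualEquiv :
    {x : BF (n + 1) // Monotone x ∧ SelfDual x} ≃ {g : BF n // Monotone g ∧ g ≤ dual g} where
  toFun x := ⟨cofactor x.1 false, by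
    obtain ⟨hx, hsd⟩ := x.2
    rw [monotone_iff_cofactor, selfDual_iff_cofactor.1 hsd] at hx
    exact ⟨hx.1, hx.2.2⟩⟩
  invFun g := ⟨ofCofactors g.1 (dual g.1), by
    rw [monotone_iff_cofactor, selfDual_iff_cofactor, cofactor_ofCofactors, cofactor_ofCofactors]
    exact ⟨⟨g.2.1, monotone_dual g.2.1, g.2.2⟩, rfl⟩⟩
  left_inv x := by
    ext1
    show ofCofactors (cofactor x.1 false) (dual (cofactor x.1 false)) = x.1
    rw [← selfDual_iff_cofactor.1 x.2.2]
    exact ofCofactors_cofactor x.1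
  right_inv _ := rfl

def monotoneLeDualEquiv :
    {g : BF (n + 1) // Monotone g ∧ g ≤ dual g} ≃
      {p : BF n × BF n // Monotone p.1 ∧ Monotone p.2 ∧ p.1 ⊔ dual p.1 ≤ p.2} where
  toFun g := ⟨(cofactor g.1 true, dual (cofactor g.1 false)), by
    obtain ⟨hg, hle⟩ := g.2
    rw [monotone_iff_cofactor] at hg
    rw [le_dual_iff_cofactor, le_dual_comm] at hle
    exact ⟨hg.2.1, monotone_dual hg.1, sup_le hle (dual_le_dual hg.2.2)⟩⟩
  invFun p := ⟨ofCofactors (dual p.1.2) p.1.1, by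
    obtain ⟨hb, hd, hle⟩ := p.2
    rw [sup_le_iff] at hle
    rw [monotone_iff_cofactor, le_dual_iff_cofactor]
    simp only [cofactor_ofCofactors, cond_true, cond_false, monotone_dual_iff]
    exact ⟨⟨hd, hb, by simpa using dual_le_dual hle.2⟩, by simpa using dual_le_dual hle.1⟩⟩
  left_inv g := by
    ext1
    simp only [dual_dual]
    exact ofCofactors_cofactor g.1
  right_inv p := by
    ext1
    simp

end BF

theorem Nat.card_subtype_prod_eq_sum {α β : Type*} [Fintype α] [Fintype β]
    (P : α → Prop) (Q : α → β → Prop) [DecidablePred P] [∀ a, DecidablePred (Q a)] :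
    Nat.card {c : α × β // P c.1 ∧ Q c.1 c.2} =
      ∑ a ∈ Finset.univ.filter P, (Finset.univ.filter (Q a)).card := by
  rw [Nat.card_congr (Equiv.subtypeProdEquivSigmaSubtype fun a b => P a ∧ Q a b), Nat.card_sigma,
    Finset.sum_filter]
  refine Finset.sum_congr rfl fun a _ => ?_
  split_ifs with ha
  · simp [ha, Nat.card_eq_fintype_card, Fintype.card_subtype]
  · simp [ha]

open Classical in
theorem stmt_9 (n : ℕ) :
    Nat.card {x : BF (n + 2) // Monotone x ∧ SelfDual x}
      = Nat.card {p : BF n × BF n //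
          Monotone p.1 ∧ Monotone p.2 ∧ p.1 ⊔ dual p.1 ≤ p.2} ∧
    Nat.card {x : BF (n + 2) // Monotone x ∧ SelfDual x}
      = ∑ b ∈ Finset.univ.filter (fun b : BF n => Monotone b),
          (Finset.univ.filter
            (fun z : BF n => Monotone z ∧ b ⊔ dual b ≤ z)).card := by
  have h := Nat.card_congr (BF.selfDualEquiv.trans (BF.monotoneLeDualEquiv (n := n)))
  exact ⟨h, h.trans (Nat.card_subtype_prod_eq_sum Monotone fun b z => Monotone z ∧ b ⊔ dual b ≤ z)⟩
end

section
/- The number λ_{n+3} of self-dual monotone Boolean functions on n+3 variables equals the number of 4-tuples (a,b,c,d) of monotone Boolean functions on n variables satisfying a ≤ b ≤ c ≤ a* and a ≤ d ≤ c & b*. -/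
namespace SD11

lemma dual_dual {n} (f : BF n) : dual (dual f) = f := by
  funext v; simp [dual]

lemma bool_not_le : ∀ {a b : Bool}, a ≤ b → (!b) ≤ (!a) := by decide

lemma dual_le_dual {n} {f g : BF n} (h : f ≤ g) : dual g ≤ dual f :=
  fun v => bool_not_le (h fun i => !v i)

lemma le_dual_of_le_dual {n} {f g : BF n} (h : f ≤ dual g) : g ≤ dual f := by
  have := dual_le_dual h
  rwa [dual_dual] at this

lemma mono_dual {n} {f : BF n} (hf : Monotone f) : Monotone (dual f) :=
  fun v v' h => bool_not_le (hf (fun i => bool_not_le (h i)))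

def join {n : ℕ} (v : Fin n → Bool) (w : Fin 3 → Bool) : Fin (n+3) → Bool :=
  Fin.addCases v w

@[simp] lemma join_left {n} (v : Fin n → Bool) (w : Fin 3 → Bool) (i : Fin n) :
    join v w (Fin.castAdd 3 i) = v i := Fin.addCases_left i

@[simp] lemma join_right {n} (v : Fin n → Bool) (w : Fin 3 → Bool) (j : Fin 3) :
    join v w (Fin.natAdd n j) = w j := Fin.addCases_right j

lemma join_mono {n} {v v' : Fin n → Bool} {w w' : Fin 3 → Bool}
    (hv : v ≤ v') (hw : w ≤ w') : join v w ≤ join v' w' := by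
  intro i
  refine Fin.addCases (motive := fun i => join v w i ≤ join v' w' i)
    (fun i => ?_) (fun j => ?_) i
  · simpa using hv i
  · simpa using hw j

lemma join_neg {n} (v : Fin n → Bool) (w : Fin 3 → Bool) :
    (fun i => ! (join v w) i) = join (fun i => ! v i) (fun j => ! w j) := by
  funext i
  refine Fin.addCases
    (motive := fun i => (! (join v w) i) = join (fun i => ! v i) (fun j => ! w j) i)
    (fun i => ?_) (fun j => ?_) i <;> simp

lemma join_split {n} (u : Fin (n+3) → Bool) :
    join (fun i => u (Fin.castAdd 3 i)) (fun j => u (Fin.natAdd n j)) = u := by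
  funext i
  refine Fin.addCases
    (motive := fun i => join (fun i => u (Fin.castAdd 3 i)) (fun j => u (Fin.natAdd n j)) i = u i)
    (fun i => ?_) (fun j => ?_) i <;> simp

def wvec (x y z : Bool) : Fin 3 → Bool := fun j => if j = 0 then x else if j = 1 then y else z

lemma wvec_neg (x y z : Bool) : (fun j => ! wvec x y z j) = wvec (!x) (!y) (!z) := by
  funext j
  by_cases h0 : j = 0 <;> by_cases h1 : j = 1 <;> simp [wvec, h0, h1]

lemma wvec_mono {x y z x' y' z' : Bool} (hx : x ≤ x') (hy : y ≤ y') (hz : z ≤ z') :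
    wvec x y z ≤ wvec x' y' z' := by
  intro j
  by_cases h0 : j = 0 <;> by_cases h1 : j = 1 <;> simp_all [wvec]

def gfun {n} (a b c d : BF n) (x y z : Bool) : BF n :=
  if x then (if y then (if z then dual a else dual b) else (if z then dual d else dual c))
  else (if y then (if z then c else d) else (if z then b else a))

lemma g_dual {n} (a b c d : BF n) (x y z : Bool) :
    gfun a b c d (!x) (!y) (!z) = dual (gfun a b c d x y z) := by
  cases x <;> cases y <;> cases z <;> simp [gfun, dual_dual]

section Ineq
variable {n : ℕ} {a b c d : BF n}
  (hma : Monotone a) (hmb : Monotone b) (hmc : Monotone c) (hmd : Monotone d)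
  (hab : a ≤ b) (hbc : b ≤ c) (hca : c ≤ dual a) (had : a ≤ d)
  (hdc : d ≤ c) (hdb : d ≤ dual b)

include hma hmb hmc hmd in
lemma g_mono (x y z : Bool) : Monotone (gfun a b c d x y z) := by
  cases x <;> cases y <;> cases z <;>
    first
      | exact hma | exact hmb | exact hmc | exact hmd
      | exact mono_dual hma | exact mono_dual hmb | exact mono_dual hmc | exact mono_dual hmd

include hab hbc hca had hdc hdb in
lemma g_le {x y z x' y' z' : Bool} (hx : x ≤ x') (hy : y ≤ y') (hz : z ≤ z') :
    gfun a b c d x y z ≤ gfun a b c d x' y' z' := by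
  have hac : a ≤ c := hab.trans hbc
  have hadc : a ≤ dual c := le_dual_of_le_dual hca
  have hdcdd : dual c ≤ dual d := dual_le_dual hdc
  have hdcdb : dual c ≤ dual b := dual_le_dual hbc
  have hdbda : dual b ≤ dual a := dual_le_dual hab
  have hddda : dual d ≤ dual a := dual_le_dual had
  have hdcda : dual c ≤ dual a := dual_le_dual hac
  have hbdd : b ≤ dual d := le_dual_of_le_dual hdb
  have hbda : b ≤ dual a := hbc.trans hca
  have hdda : d ≤ dual a := hdc.trans hca
  have hadd : a ≤ dual d := hab.trans hbdd
  have hadb : a ≤ dual b := had.trans hdb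
  have haa : a ≤ dual a := hac.trans hca
  cases x <;> cases y <;> cases z <;> cases x' <;> cases y' <;> cases z' <;>
    first
      | exact absurd hx (by decide)
      | exact absurd hy (by decide)
      | exact absurd hz (by decide)
      | exact le_refl _
      | assumption

end Ineq

def toQuad {n : ℕ} (f : BF (n+3)) : BF n × BF n × BF n × BF n :=
  (fun v => f (join v (wvec false false false)),
   fun v => f (join v (wvec false false true)),
   fun v => f (join v (wvec false true true)),
   fun v => f (join v (wvec false true false)))

def ofQuad {n : ℕ} (t : BF n × BF n × BF n × BF n) : BF (n+3) :=
  fun u => gfun t.1 t.2.1 t.2.2.1 t.2.2.2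
    (u (Fin.natAdd n 0)) (u (Fin.natAdd n 1)) (u (Fin.natAdd n 2))
    (fun i => u (Fin.castAdd 3 i))

lemma ofQuad_join {n : ℕ} (t : BF n × BF n × BF n × BF n) (v : Fin n → Bool) (w : Fin 3 → Bool) :
    ofQuad t (join v w) = gfun t.1 t.2.1 t.2.2.1 t.2.2.2 (w 0) (w 1) (w 2) v := by
  simp [ofQuad]

lemma sd_join {n : ℕ} {f : BF (n+3)} (hs : SelfDual f) (v : Fin n → Bool) (w : Fin 3 → Bool) :
    f (join v w) = ! f (join (fun i => ! v i) (fun j => ! w j)) := by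
  conv_lhs => rw [hs]
  simp [dual, join_neg]

lemma dual_slice {n : ℕ} {f : BF (n+3)} (hs : SelfDual f) (x y z : Bool) :
    dual (fun v => f (join v (wvec x y z))) = fun v => f (join v (wvec (!x) (!y) (!z))) := by
  funext v
  rw [sd_join hs v (wvec (!x) (!y) (!z)), wvec_neg]
  simp [dual, Bool.not_not]

lemma gfun_toQuad {n : ℕ} {f : BF (n+3)} (hs : SelfDual f) (x y z : Bool) (v : Fin n → Bool) :
    gfun (toQuad f).1 (toQuad f).2.1 (toQuad f).2.2.1 (toQuad f).2.2.2 x y z v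
      = f (join v (wvec x y z)) := by
  cases x <;> cases y <;> cases z <;>
    first
      | rfl
      | (rw [sd_join hs v (wvec _ _ _), wvec_neg]; rfl)

lemma ofQuad_toQuad {n : ℕ} {f : BF (n+3)} (hs : SelfDual f) : ofQuad (toQuad f) = f := by
  funext u
  rw [show ofQuad (toQuad f) u
      = gfun (toQuad f).1 (toQuad f).2.1 (toQuad f).2.2.1 (toQuad f).2.2.2
        (u (Fin.natAdd n 0)) (u (Fin.natAdd n 1)) (u (Fin.natAdd n 2))
        (fun i => u (Fin.castAdd 3 i)) from rfl,
    gfun_toQuad hs]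
  have hw : wvec (u (Fin.natAdd n 0)) (u (Fin.natAdd n 1)) (u (Fin.natAdd n 2))
      = fun j => u (Fin.natAdd n j) := by
    funext j; fin_cases j <;> rfl
  rw [hw, join_split]

lemma toQuad_ofQuad {n : ℕ} (t : BF n × BF n × BF n × BF n) : toQuad (ofQuad t) = t := by
  obtain ⟨a, b, c, d⟩ := t
  have key : ∀ x y z, (fun v => ofQuad (a,b,c,d) (join v (wvec x y z)))
      = gfun a b c d x y z := by
    intro x y z
    funext v
    rw [ofQuad_join]
    rfl
  refine Prod.ext ?_ (Prod.ext ?_ (Prod.ext ?_ ?_))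
  · exact key false false false
  · exact key false false true
  · exact key false true true
  · exact key false true false

lemma toQuad_mem {n : ℕ} {f : BF (n+3)} (hm : Monotone f) (hs : SelfDual f) :
    Monotone (toQuad f).1 ∧ Monotone (toQuad f).2.1 ∧ Monotone (toQuad f).2.2.1 ∧
    Monotone (toQuad f).2.2.2 ∧
    (toQuad f).1 ≤ (toQuad f).2.1 ∧ (toQuad f).2.1 ≤ (toQuad f).2.2.1 ∧
    (toQuad f).2.2.1 ≤ dual (toQuad f).1 ∧
    (toQuad f).1 ≤ (toQuad f).2.2.2 ∧
    (toQuad f).2.2.2 ≤ (toQuad f).2.2.1 ⊓ dual (toQuad f).2.1 := by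
  have hmw : ∀ w : Fin 3 → Bool, Monotone (fun v => f (join v w)) :=
    fun w v v' hv => hm (join_mono hv le_rfl)
  have hle : ∀ w w' : Fin 3 → Bool, w ≤ w' →
      (fun v => f (join v w)) ≤ (fun v => f (join v w')) :=
    fun w w' hw v => hm (join_mono le_rfl hw)
  refine ⟨hmw _, hmw _, hmw _, hmw _, ?_, ?_, ?_, ?_, ?_⟩
  · exact hle _ _ (wvec_mono le_rfl le_rfl (by decide))
  · exact hle _ _ (wvec_mono le_rfl (by decide) le_rfl)
  · show (fun v => f (join v (wvec false true true)))
      ≤ dual (fun v => f (join v (wvec false false false)))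
    rw [dual_slice hs]
    exact hle _ _ (wvec_mono (by decide) le_rfl le_rfl)
  · exact hle _ _ (wvec_mono le_rfl (by decide) le_rfl)
  · show (fun v => f (join v (wvec false true false)))
      ≤ (fun v => f (join v (wvec false true true))) ⊓ dual (fun v => f (join v (wvec false false true)))
    rw [dual_slice hs]
    refine le_inf ?_ ?_
    · exact hle _ _ (wvec_mono le_rfl le_rfl (by decide))
    · exact hle _ _ (wvec_mono (by decide) le_rfl (by decide))

lemma ofQuad_mem {n : ℕ} {t : BF n × BF n × BF n × BF n}
    (hma : Monotone t.1) (hmb : Monotone t.2.1) (hmc : Monotone t.2.2.1)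
    (hmd : Monotone t.2.2.2)
    (hab : t.1 ≤ t.2.1) (hbc : t.2.1 ≤ t.2.2.1) (hca : t.2.2.1 ≤ dual t.1)
    (had : t.1 ≤ t.2.2.2) (hd : t.2.2.2 ≤ t.2.2.1 ⊓ dual t.2.1) :
    Monotone (ofQuad t) ∧ SelfDual (ofQuad t) := by
  have hdc : t.2.2.2 ≤ t.2.2.1 := hd.trans inf_le_left
  have hdb : t.2.2.2 ≤ dual t.2.1 := hd.trans inf_le_right
  constructor
  · intro u u' h
    calc ofQuad t u
        = gfun t.1 t.2.1 t.2.2.1 t.2.2.2 (u (Fin.natAdd n 0)) (u (Fin.natAdd n 1))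
            (u (Fin.natAdd n 2)) (fun i => u (Fin.castAdd 3 i)) := rfl
      _ ≤ gfun t.1 t.2.1 t.2.2.1 t.2.2.2 (u (Fin.natAdd n 0)) (u (Fin.natAdd n 1))
            (u (Fin.natAdd n 2)) (fun i => u' (Fin.castAdd 3 i)) :=
          g_mono hma hmb hmc hmd _ _ _ (fun i => h _)
      _ ≤ gfun t.1 t.2.1 t.2.2.1 t.2.2.2 (u' (Fin.natAdd n 0)) (u' (Fin.natAdd n 1))
            (u' (Fin.natAdd n 2)) (fun i => u' (Fin.castAdd 3 i)) :=
          g_le hab hbc hca had hdc hdb (h _) (h _) (h _) _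
  · funext u
    show ofQuad t u = ! ofQuad t (fun i => !(u i))
    show gfun t.1 t.2.1 t.2.2.1 t.2.2.2 (u (Fin.natAdd n 0)) (u (Fin.natAdd n 1))
        (u (Fin.natAdd n 2)) (fun i => u (Fin.castAdd 3 i))
      = ! gfun t.1 t.2.1 t.2.2.1 t.2.2.2 (!(u (Fin.natAdd n 0))) (!(u (Fin.natAdd n 1)))
        (!(u (Fin.natAdd n 2))) (fun i => !(u (Fin.castAdd 3 i)))
    rw [g_dual]
    simp [dual, Bool.not_not]

theorem main (n : ℕ) :
    Nat.card {x : BF (n + 3) // Monotone x ∧ SelfDual x}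
      = Nat.card {t : BF n × BF n × BF n × BF n //
          Monotone t.1 ∧ Monotone t.2.1 ∧ Monotone t.2.2.1 ∧ Monotone t.2.2.2 ∧
          t.1 ≤ t.2.1 ∧ t.2.1 ≤ t.2.2.1 ∧ t.2.2.1 ≤ dual t.1 ∧
          t.1 ≤ t.2.2.2 ∧ t.2.2.2 ≤ t.2.2.1 ⊓ dual t.2.1} := by
  apply Nat.card_congr
  refine ⟨fun f => ⟨toQuad f.1, toQuad_mem f.2.1 f.2.2⟩,
    fun t => ⟨ofQuad t.1, ofQuad_mem t.2.1 t.2.2.1 t.2.2.2.1 t.2.2.2.2.1 t.2.2.2.2.2.1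
      t.2.2.2.2.2.2.1 t.2.2.2.2.2.2.2.1 t.2.2.2.2.2.2.2.2.1 t.2.2.2.2.2.2.2.2.2⟩, ?_, ?_⟩
  · intro f
    exact Subtype.ext (ofQuad_toQuad f.2.2)
  · intro t
    exact Subtype.ext (toQuad_ofQuad t.1)

end SD11

theorem stmt_11 (n : ℕ) :
    Nat.card {x : BF (n + 3) // Monotone x ∧ SelfDual x}
      = Nat.card {t : BF n × BF n × BF n × BF n //
          Monotone t.1 ∧ Monotone t.2.1 ∧ Monotone t.2.2.1 ∧ Monotone t.2.2.2 ∧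
          t.1 ≤ t.2.1 ∧ t.2.1 ≤ t.2.2.1 ∧ t.2.2.1 ≤ dual t.1 ∧
          t.1 ≤ t.2.2.2 ∧ t.2.2.2 ≤ t.2.2.1 ⊓ dual t.2.1} := SD11.main n
end
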